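/- Let σ be a permutation of {1,…,n} with n ≥ 2 whose permutation graph G_σ is connected, and let τ be a permutation of {1,…,n+1} obtained from σ by inserting a single new letter of value v at position p. If the vertex p is isolated (has degree 0) in the permutation graph G_τ, then either p = 1 and v = 1, or p = n+1 and v = n+1. That is, the only single-letter Type I extensions of such a σ that do not add an edge to the permutation graph are prepending the smallest value or appending the largest value. -/

import Mathlib

/-- The permutation graph of `σ`: vertices `i < j` are adjacent iff `σ i > σ j`. -/
def permGraph {n : ℕ} (σ : Equiv.Perm (Fin n)) : SimpleGraph (Fin n) :=
  SimpleGraph.fromRel (fun i j => i < j ∧ σ j < σ i)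

/-!
If `p` is isolated in `G_τ`, then every letter left of `p` is smaller than `v` and every letter
right of it is larger, so counting gives `p = v`. Removing the inserted letter, `σ` maps the
positions below `p` onto the values below `p`. A permutation preserving a proper nonempty
initial segment has no inversion across it, so its graph is disconnected unless `p = 0` or
`p = n`.
-/

section PermGraph

variable {n : ℕ} (σ : Equiv.Perm (Fin n))

theorem permGraph_adj_of_lt {i j : Fin n} (hij : i < j) :
    (permGraph σ).Adj i j ↔ σ j < σ i := by
  simp [permGraph, SimpleGraph.fromRel_adj, hij.ne, hij, not_lt_of_gt hij]

theorem lt_iff_apply_lt_of_isolated {p : Fin n} (hiso : ∀ u, ¬ (permGraph σ).Adj p u)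
    (k : Fin n) : k < p ↔ σ k < σ p := by
  rcases lt_trichotomy k p with hkp | rfl | hpk
  · have hle : σ k ≤ σ p := by
      simpa [(permGraph_adj_of_lt σ hkp).not] using hiso k ∘ SimpleGraph.Adj.symm
    simpa [hkp] using hle.lt_of_ne (σ.injective.ne hkp.ne)
  · simp
  · simpa [not_lt_of_gt hpk, (permGraph_adj_of_lt σ hpk).not] using hiso k

theorem eq_of_forall_lt_iff_apply_lt {p w : Fin n} (h : ∀ k, k < p ↔ σ k < w) : p = w := by
  have himage : (Finset.Iio p).map σ.toEmbedding = Finset.Iio w := by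
    ext x
    simpa using h (σ.symm x)
  have hcard := congrArg Finset.card himage
  rw [Finset.card_map, Fin.card_Iio, Fin.card_Iio] at hcard
  exact Fin.ext hcard

theorem not_preconnected_permGraph_of_lt_iff {a b : ℕ}
    (hsplit : ∀ k : Fin n, (k : ℕ) < a ↔ (σ k : ℕ) < b) (ha0 : 0 < a) (han : a < n) :
    ¬ (permGraph σ).Preconnected := by
  have hadj : ∀ i j, (permGraph σ).Adj i j → ((i : ℕ) < a ↔ (j : ℕ) < a) := by
    intro i j hij
    have hi := hsplit i
    have hj := hsplit j
    rcases lt_or_gt_of_ne hij.ne with hlt | hlt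
    · have := (permGraph_adj_of_lt σ hlt).1 hij
      rw [Fin.lt_def] at hlt this
      omega
    · have := (permGraph_adj_of_lt σ hlt).1 hij.symm
      rw [Fin.lt_def] at hlt this
      omega
  have hreach : ∀ i j, (permGraph σ).Reachable i j → ((i : ℕ) < a ↔ (j : ℕ) < a) := by
    rintro i j ⟨w⟩
    induction w with
    | nil => exact Iff.rfl
    | cons h _ ih => exact (hadj _ _ h).trans ih
  intro hconn
  exact ha0.ne' (by simpa using hreach ⟨0, by omega⟩ ⟨a, han⟩ (hconn _ _))

end PermGraph

theorem lt_iff_apply_lt_of_insertion {n : ℕ} (σ : Equiv.Perm (Fin n))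
    (τ : Equiv.Perm (Fin (n + 1))) (p v : Fin (n + 1))
    (hins : ∀ k : Fin (n + 1), k ≠ p → ∃ k' : Fin n,
      (k' : ℕ) = (if (k : ℕ) < (p : ℕ) then (k : ℕ) else (k : ℕ) - 1) ∧
      (τ k : ℕ) = (if (σ k' : ℕ) < (v : ℕ) then (σ k' : ℕ) else (σ k' : ℕ) + 1))
    (hsep : ∀ k, k < p ↔ τ k < v) (k' : Fin n) :
    (k' : ℕ) < p ↔ (σ k' : ℕ) < v := by
  by_cases hk' : (k' : ℕ) < p
  · have hk : k'.castSucc < p := hk'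
    obtain ⟨k'', hidx, hval⟩ := hins _ hk.ne
    rw [show k'' = k' from Fin.ext (by simpa [hk'] using hidx)] at hval
    have hτ : (τ k'.castSucc : ℕ) < v := (hsep _).1 hk
    split_ifs at hval <;> omega
  · have hk : p < k'.succ := by rw [Fin.lt_def, Fin.val_succ]; omega
    obtain ⟨k'', hidx, hval⟩ := hins _ hk.ne'
    have hidx' : ¬ (k' : ℕ) + 1 < p := by omega
    rw [show k'' = k' from Fin.ext (by simpa [hidx'] using hidx)] at hval
    have hτ : ¬ (τ k'.succ : ℕ) < v := fun h => hk.not_gt ((hsep _).2 h)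
    split_ifs at hval <;> omega

theorem isolated_insertion_is_extreme_general {n : ℕ}
    (σ : Equiv.Perm (Fin n)) (hconn : (permGraph σ).Connected)
    (τ : Equiv.Perm (Fin (n + 1))) (p v : Fin (n + 1))
    (hpv : τ p = v)
    (hins : ∀ k : Fin (n + 1), k ≠ p → ∃ k' : Fin n,
      (k' : ℕ) = (if (k : ℕ) < (p : ℕ) then (k : ℕ) else (k : ℕ) - 1) ∧
      (τ k : ℕ) = (if (σ k' : ℕ) < (v : ℕ) then (σ k' : ℕ) else (σ k' : ℕ) + 1))
    (hiso : ∀ u : Fin (n + 1), ¬ (permGraph τ).Adj p u) :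
    ((p : ℕ) = 0 ∧ (v : ℕ) = 0) ∨ ((p : ℕ) = n ∧ (v : ℕ) = n) := by
  have hsep : ∀ k, k < p ↔ τ k < v := hpv ▸ lt_iff_apply_lt_of_isolated τ hiso
  obtain rfl : p = v := eq_of_forall_lt_iff_apply_lt τ hsep
  have hsplit := lt_iff_apply_lt_of_insertion σ τ p p hins hsep
  by_contra hext
  exact not_preconnected_permGraph_of_lt_iff σ hsplit (by omega)
    (by have := p.isLt; omega) hconn.preconnected

/-- Let `σ` be a permutation of `{1,…,n}` (`n ≥ 2`) whose
permutation graph is connected, and let `τ` be a permutation of `{1,…,n+1}`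
obtained from `σ` by inserting a single new letter of value `v` at position `p`
(the hypothesis `hins` encodes, in 0-based form, that `τ p = v` and for `k ≠ p`,
`τ k = σ k'` if `σ k' < v` and `τ k = σ k' + 1` otherwise, where `k' = k` for
`k < p` and `k' = k − 1` for `k > p`). If the vertex `p` is isolated in `G_τ`,
then either `p` and `v` are both first (0 in 0-based form) or both last
(`n` in 0-based form): the only edge-free single-letter Type I extensions are
prepending the smallest value or appending the largest value. -/
theorem isolated_insertion_is_extreme {n : ℕ} (hn : 2 ≤ n)
    (σ : Equiv.Perm (Fin n)) (hconn : (permGraph σ).Connected)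
    (τ : Equiv.Perm (Fin (n + 1))) (p v : Fin (n + 1))
    (hpv : τ p = v)
    (hins : ∀ k : Fin (n + 1), k ≠ p → ∃ k' : Fin n,
      (k' : ℕ) = (if (k : ℕ) < (p : ℕ) then (k : ℕ) else (k : ℕ) - 1) ∧
      (τ k : ℕ) = (if (σ k' : ℕ) < (v : ℕ) then (σ k' : ℕ) else (σ k' : ℕ) + 1))
    (hiso : ∀ u : Fin (n + 1), ¬ (permGraph τ).Adj p u) :
    ((p : ℕ) = 0 ∧ (v : ℕ) = 0) ∨ ((p : ℕ) = n ∧ (v : ℕ) = n) :=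
  isolated_insertion_is_extreme_general σ hconn τ p v hpv hins hiso
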